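/- arXiv:1112.4684 — 2 statements merged into one kernel-verified Lean document; each statement's English description precedes it below -/
import Mathlib

section
/- Let δ > 0 and let ψ : [-(1+δ), 1+δ] → [-(1+δ), 1+δ] be a continuously differentiable even map with ψ(0) = 1 and x·ψ'(x) < 0 for all x ≠ 0. Set a = ψ(1), a' = (1+δ)·a, b' = ψ(a'). Assume a < 0, 1 > b' > -a', and ψ(b') < -a'. Then the renormalized map Ψ(x) = (1/a)·ψ(ψ(a·x)) satisfies Ψ(0) = 1, x·Ψ'(x) < 0 for all x ≠ 0 in [-(1+δ), 1+δ], and Ψ maps [-(1+δ), 1+δ] into itself. -/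
/-!
Since `a < 0`, the map `x ↦ a x` sends `I_δ` into `[a', -a']`. As `ψ` is even and decreasing on
`[0, 1+δ]`, it sends `[a', -a']` into `[b', 1] ⊂ (0, 1+δ]`, and then `[b', 1]` into
`[a, ψ b'] ⊂ [a, -a']`; dividing by `a < 0` gives `Ψ(I_δ) ⊂ [-(1+δ), 1]`.
By the chain rule `Ψ'(x) = ψ'(ψ(ax)) ψ'(ax)`: the first factor is negative because `ψ(ax) > 0`,
and `x ψ'(ax) = (ax ψ'(ax)) / a > 0`.
-/

open Set

theorem strictAntiOn_Icc_zero_of_mul_deriv_neg {ψ : ℝ → ℝ} {c : ℝ} (hψ : Continuous ψ)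
    (hder : ∀ x ∈ Icc (-c) c, x ≠ 0 → x * deriv ψ x < 0) : StrictAntiOn ψ (Icc 0 c) := by
  refine strictAntiOn_of_deriv_neg (convex_Icc 0 c) hψ.continuousOn fun x hx => ?_
  rw [interior_Icc] at hx
  exact neg_of_mul_neg_right (hder x ⟨by linarith [hx.1, hx.2], hx.2.le⟩ hx.1.ne') hx.1.le

theorem Function.Even.mem_Icc_of_abs_le {ψ : ℝ → ℝ} {c r t : ℝ} (heven : Function.Even ψ)
    (hanti : AntitoneOn ψ (Icc 0 c)) (ht : |t| ≤ r) (hr : r ≤ c) :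
    ψ t ∈ Icc (ψ r) (ψ 0) := by
  have habs : ψ |t| = ψ t := by
    rcases abs_choice t with h | h <;> rw [h]
    exact heven t
  have hr0 : 0 ≤ r := (abs_nonneg t).trans ht
  rw [← habs]
  exact ⟨hanti ⟨abs_nonneg t, ht.trans hr⟩ ⟨hr0, hr⟩ ht,
    hanti ⟨le_rfl, hr0.trans hr⟩ ⟨abs_nonneg t, ht.trans hr⟩ (abs_nonneg t)⟩

theorem hasDerivAt_one_div_mul_comp_comp_mul {ψ : ℝ → ℝ} {a : ℝ}
    (hψ : Differentiable ℝ ψ) (ha : a ≠ 0) (x : ℝ) :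
    HasDerivAt (fun x => 1 / a * ψ (ψ (a * x))) (deriv ψ (ψ (a * x)) * deriv ψ (a * x)) x := by
  have hlin : HasDerivAt (fun x => a * x) a x := by
    simpa using (hasDerivAt_id x).const_mul a
  have hcomp := ((hψ _).hasDerivAt.comp x ((hψ _).hasDerivAt.comp x hlin)).const_mul (1 / a)
  refine hcomp.congr_deriv ?_
  simp only [Function.comp_apply]
  field_simp

theorem one_div_mul_mem_Icc_of_neg {a c y : ℝ} (ha : a < 0) (hy : y ∈ Icc a (-(c * a))) :
    1 / a * y ∈ Icc (-c) 1 := by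
  rw [one_div_mul_eq_div]
  constructor
  · rw [le_div_iff_of_neg ha]; linarith [hy.2]
  · rw [div_le_iff_of_neg ha]; linarith [hy.1]

theorem renormalization_well_defined_general
    (δ : ℝ) (hδ : 0 < δ) (ψ : ℝ → ℝ)
    (hC1 : ContDiff ℝ 1 ψ)
    (heven : ∀ x, ψ (-x) = ψ x)
    (hψ0 : ψ 0 = 1)
    (hder : ∀ x ∈ Set.Icc (-(1+δ)) (1+δ), x ≠ 0 → x * deriv ψ x < 0)
    (a a' b' : ℝ) (ha : a = ψ 1) (ha' : a' = (1+δ) * a) (hb' : b' = ψ a')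
    (haneg : a < 0)
    (hb'lt : b' < 1) (hb'gt : -a' < b')
    (hψb' : ψ b' < -a')
    (Ψ : ℝ → ℝ) (hΨ : ∀ x, Ψ x = (1/a) * ψ (ψ (a * x))) :
    Ψ 0 = 1 ∧
    (∀ x ∈ Set.Icc (-(1+δ)) (1+δ), x ≠ 0 → x * deriv Ψ x < 0) ∧
    (∀ x ∈ Set.Icc (-(1+δ)) (1+δ), Ψ x ∈ Set.Icc (-(1+δ)) (1+δ)) := by
  obtain rfl : Ψ = fun x => 1 / a * ψ (ψ (a * x)) := funext hΨ
  have ha'neg : a' < 0 := ha' ▸ mul_neg_of_pos_of_neg (by linarith) haneg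
  have hanti := (strictAntiOn_Icc_zero_of_mul_deriv_neg hC1.continuous hder).antitoneOn
  have hax : ∀ x ∈ Icc (-(1+δ)) (1+δ), |a * x| ≤ -a' := fun x hx => by
    rw [abs_mul, abs_of_neg haneg, ha']
    nlinarith [abs_le.mpr hx]
  have hinner : ∀ x ∈ Icc (-(1+δ)) (1+δ), ψ (a * x) ∈ Icc b' 1 := fun x hx => by
    simpa [hψ0, heven a', ← hb'] using
      Function.Even.mem_Icc_of_abs_le heven hanti (hax x hx) (by linarith)
  refine ⟨by simp [hψ0, ← ha, haneg.ne], fun x hx hx0 => ?_, fun x hx => ?_⟩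
  · have hψd := hC1.differentiable one_ne_zero
    rw [(hasDerivAt_one_div_mul_comp_comp_mul hψd haneg.ne x).deriv]
    have hpos : 0 < ψ (a * x) := by linarith [(hinner x hx).1]
    have houter_deriv : deriv ψ (ψ (a * x)) < 0 :=
      neg_of_mul_neg_right
        (hder _ ⟨by linarith, by linarith [(hinner x hx).2]⟩ hpos.ne') hpos.le
    have hinner_deriv : 0 < x * deriv ψ (a * x) := by
      refine pos_of_mul_neg_right ?_ haneg.le
      rw [← mul_assoc]
      exact hder _ (abs_le.mp ((hax x hx).trans (by linarith))) (mul_ne_zero haneg.ne hx0)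
    rw [mul_left_comm]
    exact mul_neg_of_neg_of_pos houter_deriv hinner_deriv
  · have houter := (hanti.mono (Icc_subset_Icc (by linarith) (by linarith))).mapsTo_Icc
      (hinner x hx)
    rw [← ha] at houter
    exact Icc_subset_Icc_right (by linarith)
      (one_div_mul_mem_Icc_of_neg haneg (ha' ▸ ⟨houter.1, by linarith [houter.2]⟩))

/-- Well-definedness of the doubling renormalization operator
`R_δ(ψ)(x) = (1/a)·ψ(ψ(a·x))` on the space `M_δ`. -/
theorem renormalization_well_defined
    (δ : ℝ) (hδ : 0 < δ) (ψ : ℝ → ℝ)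
    (hC1 : ContDiff ℝ 1 ψ)
    (hmap : ∀ x ∈ Set.Icc (-(1+δ)) (1+δ), ψ x ∈ Set.Icc (-(1+δ)) (1+δ))
    (heven : ∀ x, ψ (-x) = ψ x)
    (hψ0 : ψ 0 = 1)
    (hder : ∀ x ∈ Set.Icc (-(1+δ)) (1+δ), x ≠ 0 → x * deriv ψ x < 0)
    (a a' b' : ℝ) (ha : a = ψ 1) (ha' : a' = (1+δ) * a) (hb' : b' = ψ a')
    (haneg : a < 0)
    (hb'lt : b' < 1) (hb'gt : -a' < b')
    (hψb' : ψ b' < -a')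
    (Ψ : ℝ → ℝ) (hΨ : ∀ x, Ψ x = (1/a) * ψ (ψ (a * x))) :
    Ψ 0 = 1 ∧
    (∀ x ∈ Set.Icc (-(1+δ)) (1+δ), x ≠ 0 → x * deriv Ψ x < 0) ∧
    (∀ x ∈ Set.Icc (-(1+δ)) (1+δ), Ψ x ∈ Set.Icc (-(1+δ)) (1+δ)) :=
  renormalization_well_defined_general δ hδ ψ hC1 heven hψ0 hder a a' b' ha ha' hb' haneg hb'lt
    hb'gt hψb' Ψ hΨ
end

section
/- Let ω be irrational, let h : ℝ → ℝ be continuously differentiable, and let x : 𝕋 → ℝ be continuously differentiable with x(θ + ω) = h(x(θ)) for all θ. If there exists θ₀ with h'(x(θ₀)) = 0, then x' ≡ 0 on 𝕋, i.e., x is constant, and the constant value c satisfies c = h(c) and h'(c) = 0. -/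
/-!
Differentiating the invariance relation gives `x'(θ + ω) = h'(x θ) · x'(θ)`. Hence the zero set
of `x'`, read on the circle `ℝ/ℤ`, is closed, contains `θ₀ + ω`, and is mapped into itself by
the rotation by `ω`. Forward orbits of an irrational rotation are dense, so `x'` vanishes
identically; the remaining claims follow from the invariance relation at `θ₀`.
-/

open Function Set

theorem Function.Semiconj.deriv_add_const {𝕜 : Type*} [NontriviallyNormedField 𝕜]
    {x h : 𝕜 → 𝕜} {ω : 𝕜} (hs : Semiconj x (· + ω) h) {θ : 𝕜}
    (hh : DifferentiableAt 𝕜 h (x θ)) (hx : DifferentiableAt 𝕜 x θ) :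
    deriv x (θ + ω) = deriv h (x θ) * deriv x θ := by
  rw [← deriv_comp_add_const, show (fun t ↦ x (t + ω)) = h ∘ x from funext hs,
    deriv_comp θ hh hx]

theorem Function.Periodic.deriv {𝕜 F : Type*} [NontriviallyNormedField 𝕜] [NormedAddCommGroup F]
    [NormedSpace 𝕜 F] {f : 𝕜 → F} {c : 𝕜} (hf : Periodic f c) : Periodic (deriv f) c := by
  intro t
  rw [← deriv_comp_add_const, funext hf]

theorem IsClosed.eq_univ_of_denseRange_nsmul {G : Type*} [AddGroup G] [TopologicalSpace G]
    [ContinuousAdd G] {Z : Set G} (hZ : IsClosed Z) {g : G} (hg : DenseRange (· • g : ℕ → G))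
    (hne : Z.Nonempty) (hadd : ∀ z ∈ Z, z + g ∈ Z) : Z = univ := by
  obtain ⟨z, hz⟩ := hne
  have horbit : range (· • g : ℕ → G) ⊆ (z + ·) ⁻¹' Z := by
    rintro _ ⟨n, rfl⟩
    induction n with
    | zero => simpa using hz
    | succ n ih => simpa only [mem_preimage, succ_nsmul, ← add_assoc] using hadd _ ih
  have hall : (z + ·) ⁻¹' Z = univ :=
    eq_univ_of_univ_subset <| hg.closure_range ▸
      closure_minimal horbit (hZ.preimage (continuous_const_add z))
  refine eq_univ_of_forall fun w ↦ ?_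
  simpa using eq_univ_iff_forall.1 hall (-z + w)

theorem denseRange_nsmul_coe_of_irrational {ω : ℝ} (hω : Irrational ω) :
    DenseRange (· • (ω : AddCircle (1 : ℝ)) : ℕ → AddCircle (1 : ℝ)) :=
  denseRange_zsmul_iff_nsmul.1 (AddCircle.denseRange_zsmul_coe_iff.2 (by simpa using hω))

theorem deriv_eq_zero_of_semiconj_add_irrational {x h : ℝ → ℝ} {ω : ℝ} (hω : Irrational ω)
    (hh : Differentiable ℝ h) (hx : ContDiff ℝ 1 x) (hper : Periodic x 1)
    (hs : Semiconj x (· + ω) h) {θ₀ : ℝ} (hcrit : deriv h (x θ₀) = 0) : deriv x = 0 := by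
  have hxd := hx.differentiable one_ne_zero
  have hstep : ∀ t, deriv x t = 0 → deriv x (t + ω) = 0 := fun t ht ↦ by
    rw [hs.deriv_add_const (hh _) (hxd t), ht, mul_zero]
  have hstart : deriv x (θ₀ + ω) = 0 := by
    rw [hs.deriv_add_const (hh _) (hxd θ₀), hcrit, zero_mul]
  let F : AddCircle (1 : ℝ) → ℝ := hper.deriv.lift
  have hF : Continuous F := (hx.continuous_deriv le_rfl).quotient_liftOn' _
  have hZ : {z | F z = 0} = univ := by
    refine (isClosed_eq hF continuous_const).eq_univ_of_denseRange_nsmul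
      (denseRange_nsmul_coe_of_irrational hω) ⟨QuotientAddGroup.mk (θ₀ + ω), hstart⟩ ?_
    intro z hz
    obtain ⟨t, rfl⟩ := QuotientAddGroup.mk_surjective z
    exact hstep t hz
  funext t
  exact eq_univ_iff_forall.1 hZ t

/-- An invariant curve of an uncoupled map whose fiber derivative vanishes at one
point must be a constant superattracting fixed point. -/
theorem invariant_curve_constant
    (ω : ℝ) (hω : Irrational ω)
    (h : ℝ → ℝ) (hh : ContDiff ℝ 1 h)
    (x : ℝ → ℝ) (hx : ContDiff ℝ 1 x) (hper : Function.Periodic x 1)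
    (hinv : ∀ θ, x (θ + ω) = h (x θ))
    (θ₀ : ℝ) (hcrit : deriv h (x θ₀) = 0) :
    (∀ θ, deriv x θ = 0) ∧
    ∃ c : ℝ, (∀ θ, x θ = c) ∧ h c = c ∧ deriv h c = 0 := by
  have hD : ∀ θ, deriv x θ = 0 := congrFun <|
    deriv_eq_zero_of_semiconj_add_irrational hω (hh.differentiable one_ne_zero) hx hper hinv hcrit
  have hconst : ∀ θ, x θ = x θ₀ := fun θ ↦
    is_const_of_deriv_eq_zero (hx.differentiable one_ne_zero) hD θ θ₀
  refine ⟨hD, x θ₀, hconst, ?_, hcrit⟩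
  rw [← hinv, hconst]
end
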